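/- arXiv:1103.6077 — 2 statements merged into one kernel-verified Lean document; each statement's English description precedes it below -/
import Mathlib

section
/- Let u, α, β : ℝ² → ℝ be smooth functions of (x,t). Define the 4×4 real matrix-valued functions a₁ = [[0,e₁],[e₁,0]], a₂ = [[0,e₂],[e₂,0]], v₁ = [[τ(α),0],[0,0]], v₂ = [[τ(β),0],[0,0]], b = [[I₂,0],[0,H(u/2)]] (2×2 block notation), and let σ₁(X) = S X S with S = diag(1,1,1,−1). Then the two matrix equations ∂_t(b a₁ b⁻¹) − ∂_x(b a₂ b⁻¹) + [v₂, b a₁ b⁻¹] − [v₁, b a₂ b⁻¹] = 0 and ∂_t v₁ − ∂_x v₂ − [v₁, v₂] − [σ₁(b a₁ b⁻¹), b a₂ b⁻¹] + [σ₁(b a₂ b⁻¹), b a₁ b⁻¹] = 0 hold on ℝ² if and only if α = −(1/2)∂_t u, β = −(1/2)∂_x u, and u satisfies the sinh-Gordon equation ∂_x² u − ∂_t² u = 4 sinh u. -/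
set_option maxHeartbeats 1000000


/- STATEMENT 1: the 1-dimensional twisted O(J,J)/(O(J)×O(J))-system with (n,q)=(2,1),
   twisted by σ₁, is the sinh-Gordon equation (Example 3.2 / Ex:sinh). -/

noncomputable section

open Matrix Real

/-- partial derivative in the first (x) variable -/
def px (f : ℝ → ℝ → ℝ) (x t : ℝ) : ℝ := deriv (fun s => f s t) x

/-- partial derivative in the second (t) variable -/
def pt (f : ℝ → ℝ → ℝ) (x t : ℝ) : ℝ := deriv (fun s => f x s) t

/-- entrywise partial derivative in x of a matrix-valued function -/
def pxM (f : ℝ → ℝ → Matrix (Fin 4) (Fin 4) ℝ) (x t : ℝ) : Matrix (Fin 4) (Fin 4) ℝ :=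
  Matrix.of fun i j => deriv (fun s => f s t i j) x

/-- entrywise partial derivative in t of a matrix-valued function -/
def ptM (f : ℝ → ℝ → Matrix (Fin 4) (Fin 4) ℝ) (x t : ℝ) : Matrix (Fin 4) (Fin 4) ℝ :=
  Matrix.of fun i j => deriv (fun s => f x s i j) t

/-- a₁ = [[0,e₁],[e₁,0]] -/
def a1 : Matrix (Fin 4) (Fin 4) ℝ := !![0,0,1,0; 0,0,0,0; 1,0,0,0; 0,0,0,0]

/-- a₂ = [[0,e₂],[e₂,0]] -/
def a2 : Matrix (Fin 4) (Fin 4) ℝ := !![0,0,0,0; 0,0,0,1; 0,0,0,0; 0,1,0,0]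

/-- S = diag(1,1,1,−1) -/
def S : Matrix (Fin 4) (Fin 4) ℝ := !![1,0,0,0; 0,1,0,0; 0,0,1,0; 0,0,0,-1]

/-- σ₁(X) = S X S -/
def sigma1 (X : Matrix (Fin 4) (Fin 4) ℝ) : Matrix (Fin 4) (Fin 4) ℝ := S * X * S

/-- v = [[τ(s),0],[0,0]] with τ(s) = [[0,s],[s,0]] -/
def vmat (s : ℝ → ℝ → ℝ) (x t : ℝ) : Matrix (Fin 4) (Fin 4) ℝ :=
  !![0, s x t, 0, 0; s x t, 0, 0, 0; 0, 0, 0, 0; 0, 0, 0, 0]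

/-- b = [[I₂,0],[0,H(u/2)]] with H(θ) = [[cosh θ, sinh θ],[sinh θ, cosh θ]] -/
def bmat (u : ℝ → ℝ → ℝ) (x t : ℝ) : Matrix (Fin 4) (Fin 4) ℝ :=
  !![1,0,0,0;
     0,1,0,0;
     0,0, Real.cosh (u x t / 2), Real.sinh (u x t / 2);
     0,0, Real.sinh (u x t / 2), Real.cosh (u x t / 2)]

lemma bmat_inv (u : ℝ → ℝ → ℝ) (x t : ℝ) : (bmat u x t)⁻¹ =
    !![1,0,0,0;0,1,0,0;
       0,0, Real.cosh (u x t / 2), -Real.sinh (u x t / 2);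
       0,0, -Real.sinh (u x t / 2), Real.cosh (u x t / 2)] := by
  apply Matrix.inv_eq_right_inv
  ext i j
  fin_cases i <;> fin_cases j <;>
    simp [bmat, Matrix.mul_apply, Fin.sum_univ_four, Matrix.one_apply,
      Matrix.vecHead, Matrix.vecTail] <;>
    nlinarith [Real.cosh_sq_sub_sinh_sq (u x t / 2)]

lemma B1_eq (u : ℝ → ℝ → ℝ) (x t : ℝ) :
    bmat u x t * a1 * (bmat u x t)⁻¹ =
    !![0,0, Real.cosh (u x t / 2), -Real.sinh (u x t / 2);
       0,0,0,0;
       Real.cosh (u x t / 2),0,0,0;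
       Real.sinh (u x t / 2),0,0,0] := by
  rw [bmat_inv]
  ext i j
  fin_cases i <;> fin_cases j <;>
    simp [bmat, a1, Matrix.mul_apply, Fin.sum_univ_four, Matrix.vecHead, Matrix.vecTail]

lemma B2_eq (u : ℝ → ℝ → ℝ) (x t : ℝ) :
    bmat u x t * a2 * (bmat u x t)⁻¹ =
    !![0,0,0,0;
       0,0, -Real.sinh (u x t / 2), Real.cosh (u x t / 2);
       0, Real.sinh (u x t / 2),0,0;
       0, Real.cosh (u x t / 2),0,0] := by
  rw [bmat_inv]
  ext i j
  fin_cases i <;> fin_cases j <;>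
    simp [bmat, a2, Matrix.mul_apply, Fin.sum_univ_four, Matrix.vecHead, Matrix.vecTail]

lemma hasDerivAt_t {u : ℝ → ℝ → ℝ} (hu : ContDiff ℝ (⊤ : ℕ∞) (Function.uncurry u)) (x t : ℝ) :
    HasDerivAt (fun s => u x s) (pt u x t) t := by
  have h : Differentiable ℝ (fun s : ℝ => Function.uncurry u (x, s)) :=
    (hu.differentiable (by simp)).comp ((differentiable_const x).prodMk differentiable_id)
  exact (h t).hasDerivAt

lemma hasDerivAt_x {u : ℝ → ℝ → ℝ} (hu : ContDiff ℝ (⊤ : ℕ∞) (Function.uncurry u)) (x t : ℝ) :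
    HasDerivAt (fun s => u s t) (px u x t) x := by
  have h : Differentiable ℝ (fun s : ℝ => Function.uncurry u (s, t)) :=
    (hu.differentiable (by simp)).comp (differentiable_id.prodMk (differentiable_const t))
  exact (h x).hasDerivAt

lemma eq1_explicit (u α β : ℝ → ℝ → ℝ) (hu : ContDiff ℝ (⊤ : ℕ∞) (Function.uncurry u)) (x t : ℝ) :
    ptM (fun x t => bmat u x t * a1 * (bmat u x t)⁻¹) x t
        - pxM (fun x t => bmat u x t * a2 * (bmat u x t)⁻¹) x t
        + (vmat β x t * (bmat u x t * a1 * (bmat u x t)⁻¹)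
            - (bmat u x t * a1 * (bmat u x t)⁻¹) * vmat β x t)
        - (vmat α x t * (bmat u x t * a2 * (bmat u x t)⁻¹)
            - (bmat u x t * a2 * (bmat u x t)⁻¹) * vmat α x t)
    = !![0, 0, Real.sinh (u x t/2) * (pt u x t/2 + α x t),
              -(Real.cosh (u x t/2) * (pt u x t/2 + α x t));
         0, 0, Real.cosh (u x t/2) * (px u x t/2 + β x t),
              -(Real.sinh (u x t/2) * (px u x t/2 + β x t));
         Real.sinh (u x t/2) * (pt u x t/2 + α x t),
              -(Real.cosh (u x t/2) * (px u x t/2 + β x t)), 0, 0;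
         Real.cosh (u x t/2) * (pt u x t/2 + α x t),
              -(Real.sinh (u x t/2) * (px u x t/2 + β x t)), 0, 0] := by
  have hB1 : (fun x t => bmat u x t * a1 * (bmat u x t)⁻¹)
      = fun x t => !![0,0, Real.cosh (u x t / 2), -Real.sinh (u x t / 2);
         0,0,0,0; Real.cosh (u x t / 2),0,0,0; Real.sinh (u x t / 2),0,0,0] :=
    funext fun x => funext fun t => B1_eq u x t
  have hB2 : (fun x t => bmat u x t * a2 * (bmat u x t)⁻¹)
      = fun x t => !![0,0,0,0; 0,0, -Real.sinh (u x t / 2), Real.cosh (u x t / 2);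
         0, Real.sinh (u x t / 2),0,0; 0, Real.cosh (u x t / 2),0,0] :=
    funext fun x => funext fun t => B2_eq u x t
  have d1 : deriv (fun s => Real.cosh (u x s / 2)) t
      = Real.sinh (u x t / 2) * (pt u x t / 2) :=
    (((hasDerivAt_t hu x t).div_const 2).cosh).deriv
  have d2 : deriv (fun s => Real.sinh (u x s / 2)) t
      = Real.cosh (u x t / 2) * (pt u x t / 2) :=
    (((hasDerivAt_t hu x t).div_const 2).sinh).deriv
  have d3 : deriv (fun s => -Real.sinh (u x s / 2)) t
      = -(Real.cosh (u x t / 2) * (pt u x t / 2)) :=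
    (((hasDerivAt_t hu x t).div_const 2).sinh).neg.deriv
  have d4 : deriv (fun s => Real.cosh (u s t / 2)) x
      = Real.sinh (u x t / 2) * (px u x t / 2) :=
    (((hasDerivAt_x hu x t).div_const 2).cosh).deriv
  have d5 : deriv (fun s => Real.sinh (u s t / 2)) x
      = Real.cosh (u x t / 2) * (px u x t / 2) :=
    (((hasDerivAt_x hu x t).div_const 2).sinh).deriv
  have d6 : deriv (fun s => -Real.sinh (u s t / 2)) x
      = -(Real.cosh (u x t / 2) * (px u x t / 2)) :=
    (((hasDerivAt_x hu x t).div_const 2).sinh).neg.deriv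
  rw [hB1, hB2, B1_eq, B2_eq]
  ext i j
  fin_cases i <;> fin_cases j <;>
    simp [ptM, pxM, vmat, Matrix.mul_apply, Fin.sum_univ_four,
      Matrix.vecHead, Matrix.vecTail, d1, d2, d3, d4, d5, d6] <;>
    ring

lemma sB1_eq (u : ℝ → ℝ → ℝ) (x t : ℝ) :
    sigma1 (bmat u x t * a1 * (bmat u x t)⁻¹) =
    !![0,0, Real.cosh (u x t / 2), Real.sinh (u x t / 2);
       0,0,0,0;
       Real.cosh (u x t / 2),0,0,0;
       -Real.sinh (u x t / 2),0,0,0] := by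
  rw [B1_eq]
  unfold sigma1
  ext i j
  fin_cases i <;> fin_cases j <;>
    simp [S, Matrix.mul_apply, Fin.sum_univ_four, Matrix.vecHead, Matrix.vecTail]

lemma sB2_eq (u : ℝ → ℝ → ℝ) (x t : ℝ) :
    sigma1 (bmat u x t * a2 * (bmat u x t)⁻¹) =
    !![0,0,0,0;
       0,0, -Real.sinh (u x t / 2), -Real.cosh (u x t / 2);
       0, Real.sinh (u x t / 2),0,0;
       0, -Real.cosh (u x t / 2),0,0] := by
  rw [B2_eq]
  unfold sigma1
  ext i j
  fin_cases i <;> fin_cases j <;>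
    simp [S, Matrix.mul_apply, Fin.sum_univ_four, Matrix.vecHead, Matrix.vecTail]

lemma eq2_explicit (u α β : ℝ → ℝ → ℝ) (x t : ℝ) :
    ptM (vmat α) x t - pxM (vmat β) x t
        - (vmat α x t * vmat β x t - vmat β x t * vmat α x t)
        - (sigma1 (bmat u x t * a1 * (bmat u x t)⁻¹) * (bmat u x t * a2 * (bmat u x t)⁻¹)
            - (bmat u x t * a2 * (bmat u x t)⁻¹) * sigma1 (bmat u x t * a1 * (bmat u x t)⁻¹))
        + (sigma1 (bmat u x t * a2 * (bmat u x t)⁻¹) * (bmat u x t * a1 * (bmat u x t)⁻¹)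
            - (bmat u x t * a1 * (bmat u x t)⁻¹) * sigma1 (bmat u x t * a2 * (bmat u x t)⁻¹))
    = !![0, pt α x t - px β x t - 2 * Real.sinh (u x t), 0, 0;
         pt α x t - px β x t - 2 * Real.sinh (u x t), 0, 0, 0;
         0,0,0,0; 0,0,0,0] := by
  have hs : Real.sinh (u x t) = 2 * Real.sinh (u x t / 2) * Real.cosh (u x t / 2) := by
    have h := Real.sinh_two_mul (u x t / 2)
    rw [show 2 * (u x t / 2) = u x t by ring] at h
    exact h
  rw [sB1_eq, sB2_eq, B1_eq, B2_eq]
  ext i j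
  fin_cases i <;> fin_cases j <;>
    simp [ptM, pxM, pt, px, vmat, Matrix.mul_apply, Fin.sum_univ_four,
      Matrix.vecHead, Matrix.vecTail, hs] <;>
    ring

theorem sinhGordon_equivalence (u α β : ℝ → ℝ → ℝ)
    (hu : ContDiff ℝ (⊤ : ℕ∞) (Function.uncurry u))
    (hα : ContDiff ℝ (⊤ : ℕ∞) (Function.uncurry α))
    (hβ : ContDiff ℝ (⊤ : ℕ∞) (Function.uncurry β)) :
    (∀ x t : ℝ,
      ptM (fun x t => bmat u x t * a1 * (bmat u x t)⁻¹) x t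
        - pxM (fun x t => bmat u x t * a2 * (bmat u x t)⁻¹) x t
        + (vmat β x t * (bmat u x t * a1 * (bmat u x t)⁻¹)
            - (bmat u x t * a1 * (bmat u x t)⁻¹) * vmat β x t)
        - (vmat α x t * (bmat u x t * a2 * (bmat u x t)⁻¹)
            - (bmat u x t * a2 * (bmat u x t)⁻¹) * vmat α x t) = 0
      ∧ ptM (vmat α) x t - pxM (vmat β) x t
        - (vmat α x t * vmat β x t - vmat β x t * vmat α x t)
        - (sigma1 (bmat u x t * a1 * (bmat u x t)⁻¹) * (bmat u x t * a2 * (bmat u x t)⁻¹)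
            - (bmat u x t * a2 * (bmat u x t)⁻¹) * sigma1 (bmat u x t * a1 * (bmat u x t)⁻¹))
        + (sigma1 (bmat u x t * a2 * (bmat u x t)⁻¹) * (bmat u x t * a1 * (bmat u x t)⁻¹)
            - (bmat u x t * a1 * (bmat u x t)⁻¹) * sigma1 (bmat u x t * a2 * (bmat u x t)⁻¹)) = 0)
    ↔ (∀ x t : ℝ,
      α x t = -(1/2) * pt u x t ∧ β x t = -(1/2) * px u x t
      ∧ px (px u) x t - pt (pt u) x t = 4 * Real.sinh (u x t)) := by
  -- characterization of equation 1 at a point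
  have key1 : ∀ x t : ℝ,
      (ptM (fun x t => bmat u x t * a1 * (bmat u x t)⁻¹) x t
        - pxM (fun x t => bmat u x t * a2 * (bmat u x t)⁻¹) x t
        + (vmat β x t * (bmat u x t * a1 * (bmat u x t)⁻¹)
            - (bmat u x t * a1 * (bmat u x t)⁻¹) * vmat β x t)
        - (vmat α x t * (bmat u x t * a2 * (bmat u x t)⁻¹)
            - (bmat u x t * a2 * (bmat u x t)⁻¹) * vmat α x t) = 0)
      ↔ (α x t = -(1/2) * pt u x t ∧ β x t = -(1/2) * px u x t) := by
    intro x t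
    rw [eq1_explicit u α β hu x t]
    constructor
    · intro h
      have h03 := congrFun (congrFun h 0) 3
      have h12 := congrFun (congrFun h 1) 2
      simp [Matrix.vecHead, Matrix.vecTail] at h03 h12
      have hc := Real.cosh_pos (u x t / 2)
      constructor
      · rcases h03 with h | h
        · linarith
        · linarith
      · rcases h12 with h | h
        · linarith
        · linarith
    · rintro ⟨h1, h2⟩
      ext i j
      fin_cases i <;> fin_cases j <;>
        simp [h1, h2, Matrix.vecHead, Matrix.vecTail] <;> ring_nf <;>
        simp [mul_comm]
  -- second derivative identifications
  have hptα : (∀ x t : ℝ, α x t = -(1/2) * pt u x t) →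
      ∀ x t : ℝ, pt α x t = -(1/2) * pt (pt u) x t := by
    intro h x t
    have hfe : (fun s => α x s) = fun s => -(1/2) * deriv (fun r => u x r) s :=
      funext fun s => h x s
    show deriv (fun s => α x s) t = _
    rw [hfe, deriv_const_mul_field]
    rfl
  have hpxβ : (∀ x t : ℝ, β x t = -(1/2) * px u x t) →
      ∀ x t : ℝ, px β x t = -(1/2) * px (px u) x t := by
    intro h x t
    have hfe : (fun s => β s t) = fun s => -(1/2) * deriv (fun r => u r t) s :=
      funext fun s => h s t
    show deriv (fun s => β s t) x = _
    rw [hfe, deriv_const_mul_field]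
    rfl
  constructor
  · intro H x t
    have hA : ∀ x t : ℝ, α x t = -(1/2) * pt u x t ∧ β x t = -(1/2) * px u x t :=
      fun x t => (key1 x t).mp (H x t).1
    refine ⟨(hA x t).1, (hA x t).2, ?_⟩
    have h2 := (H x t).2
    rw [eq2_explicit u α β x t] at h2
    have h01 := congrFun (congrFun h2 0) 1
    simp [Matrix.vecHead, Matrix.vecTail] at h01
    have e1 := hptα (fun x t => (hA x t).1) x t
    have e2 := hpxβ (fun x t => (hA x t).2) x t
    rw [e1, e2] at h01
    linarith
  · intro H x t
    have e1 := hptα (fun x t => (H x t).1) x t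
    have e2 := hpxβ (fun x t => (H x t).2.1) x t
    refine ⟨(key1 x t).mpr ⟨(H x t).1, (H x t).2.1⟩, ?_⟩
    rw [eq2_explicit u α β x t]
    have hD : pt α x t - px β x t - 2 * Real.sinh (u x t) = 0 := by
      rw [e1, e2]
      have := (H x t).2.2
      linarith
    rw [hD]
    ext i j
    fin_cases i <;> fin_cases j <;> simp [Matrix.vecHead, Matrix.vecTail]


end
end

section
/- Let n ≥ 1, U ⊆ ℝⁿ open, J = diag(−1,1,…,1) = diag(ε₁,…,ε_n) with ε₁ = −1 and ε_k = 1 for k ≥ 2. Let A = (a^k_i) : U → M(n,ℝ) be smooth with Aᵗ J A = J, and let F = (f_{ij}) : U → M(n,ℝ) be smooth with f_{ii} = 0 for all i; set ω_i = e_i F − J Fᵗ e_i J. If for all i: ∂_{x_i} A = A(e_i Fᵗ − J F e_i J), and for all i, j: ∂_{x_i} ω_j − ∂_{x_j} ω_i + [ω_i, ω_j] + e_i Aᵗ e₁ J A J e_j − e_j Aᵗ e₁ J A J e_i = 0, then the generalized sinh-Gordon equations hold: ∂_{x_j} a^k_i = a^k_j f_{ij} for all k and all i ≠ j; ε_j ∂_{x_j}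 f_{ij} + ε_i ∂_{x_i} f_{ji} + Σ_{k≠i,j} ε_k f_{ik} f_{jk} = −a^1_i a^1_j for i ≠ j; and ∂_{x_k} f_{ij} = f_{ik} f_{kj} for i, j, k distinct. -/
/- STATEMENT 9: the 'Moreover' part (Step 3) of Theorem 3.5: the matrix form of the
   1-dimensional twisted O(J,J)/(O(J)×O(J))-system (J = I_{1,n−1}) yields the
   componentwise generalized sinh-Gordon equation (E:GSHGE1)-(E:GSHGE4). -/

noncomputable section

open Matrix

variable {n : ℕ}

/-- partial derivative ∂_{x_j} of a scalar function on ℝⁿ -/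
def pd (j : Fin n) (f : (Fin n → ℝ) → ℝ) (x : Fin n → ℝ) : ℝ :=
  fderiv ℝ f x (Pi.single j 1)

/-- entrywise partial derivative ∂_{x_i} of a matrix-valued function on ℝⁿ -/
def mpd (i : Fin n) (f : (Fin n → ℝ) → Matrix (Fin n) (Fin n) ℝ) (x : Fin n → ℝ) :
    Matrix (Fin n) (Fin n) ℝ :=
  Matrix.of fun a b => fderiv ℝ (fun y => f y a b) x (Pi.single i 1)

/-- ε = (−1,1,…,1) -/
def eps {n : ℕ} (k : Fin n) : ℝ := if (k : ℕ) = 0 then -1 else 1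

/-- J = diag(ε₁,…,ε_n) = diag(−1,1,…,1) -/
def Jmat (n : ℕ) : Matrix (Fin n) (Fin n) ℝ := Matrix.diagonal eps

/-- e_j : the diagonal matrix with 1 in the j-th diagonal entry and 0 elsewhere -/
def eMat (j : Fin n) : Matrix (Fin n) (Fin n) ℝ :=
  Matrix.diagonal (Pi.single j 1)

/-- e₁ = diag(1,0,…,0) -/
def e1Mat (n : ℕ) : Matrix (Fin n) (Fin n) ℝ :=
  Matrix.diagonal fun i => if (i : ℕ) = 0 then (1 : ℝ) else 0

theorem generalized_sinhGordon (hn : 0 < n) (U : Set (Fin n → ℝ)) (hU : IsOpen U)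
    (A F : (Fin n → ℝ) → Matrix (Fin n) (Fin n) ℝ)
    (hA : ∀ a b : Fin n, ContDiffOn ℝ (⊤ : ℕ∞) (fun x => A x a b) U)
    (hF : ∀ a b : Fin n, ContDiffOn ℝ (⊤ : ℕ∞) (fun x => F x a b) U)
    (hAO : ∀ x ∈ U, (A x)ᵀ * Jmat n * A x = Jmat n)
    (hFdiag : ∀ x ∈ U, ∀ i : Fin n, F x i i = 0)
    (ω : Fin n → (Fin n → ℝ) → Matrix (Fin n) (Fin n) ℝ)
    (hω : ∀ i x, ω i x = eMat i * F x - Jmat n * (F x)ᵀ * eMat i * Jmat n)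
    (hdA : ∀ x ∈ U, ∀ i : Fin n,
      mpd i A x = A x * (eMat i * (F x)ᵀ - Jmat n * F x * eMat i * Jmat n))
    (hcurv : ∀ x ∈ U, ∀ i j : Fin n,
      mpd i (ω j) x - mpd j (ω i) x + (ω i x * ω j x - ω j x * ω i x)
        + eMat i * (A x)ᵀ * e1Mat n
            * Jmat n * A x * Jmat n * eMat j
        - eMat j * (A x)ᵀ * e1Mat n
            * Jmat n * A x * Jmat n * eMat i = 0) :
    (∀ x ∈ U, ∀ k i j : Fin n, i ≠ j →
      pd j (fun y => A y k i) x = A x k j * F x i j)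
    ∧ (∀ x ∈ U, ∀ i j : Fin n, i ≠ j →
      eps j * pd j (fun y => F y i j) x + eps i * pd i (fun y => F y j i) x
        + ∑ k ∈ Finset.univ.filter (fun k : Fin n => k ≠ i ∧ k ≠ j),
            eps k * F x i k * F x j k
        = -(A x ⟨0, hn⟩ i * A x ⟨0, hn⟩ j))
    ∧ (∀ x ∈ U, ∀ i j k : Fin n, i ≠ j → j ≠ k → i ≠ k →
      pd k (fun y => F y i j) x = F x i k * F x k j) := by
  -- differentiability of entries of F
  have hdiffF : ∀ (a b : Fin n), ∀ x ∈ U, DifferentiableAt ℝ (fun y => F y a b) x :=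
    fun a b x hx => ((hF a b).differentiableOn (by simp)).differentiableAt (hU.mem_nhds hx)
  -- entrywise formula for ω
  have hωe : ∀ (q : Fin n) (y : Fin n → ℝ) (a b : Fin n),
      ω q y a b = (if a = q then F y q b else 0)
        - (if b = q then eps a * eps q * F y q a else 0) := by
    intro q y a b
    rw [hω]
    simp only [Matrix.sub_apply, eMat, Jmat, Matrix.diagonal_mul, Matrix.mul_diagonal,
      Matrix.transpose_apply, Pi.single_apply]
    rcases eq_or_ne a q with ha | ha <;> rcases eq_or_ne b q with hb | hb <;>
      simp only [ha, hb, if_pos rfl, if_neg, if_true] <;> simp [ha, hb] <;> ring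
  -- entrywise formula for mpd of ω
  have hmpdω : ∀ (p q : Fin n), ∀ x ∈ U, ∀ (a b : Fin n),
      mpd p (ω q) x a b = (if a = q then pd p (fun y => F y q b) x else 0)
        - (if b = q then eps a * eps q * pd p (fun y => F y q a) x else 0) := by
    intro p q x hx a b
    have hfun : (fun y => ω q y a b) = fun y =>
        (if a = q then (1:ℝ) else 0) * F y q b
          - (if b = q then eps a * eps q else 0) * F y q a := by
      funext y; rw [hωe]; split_ifs <;> ring
    show fderiv ℝ (fun y => ω q y a b) x (Pi.single p 1) = _
    rw [hfun, fderiv_fun_sub ((hdiffF q b x hx).const_mul _) ((hdiffF q a x hx).const_mul _),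
      fderiv_const_mul (hdiffF q b x hx), fderiv_const_mul (hdiffF q a x hx)]
    simp only [ContinuousLinearMap.sub_apply, ContinuousLinearMap.smul_apply, smul_eq_mul, pd]
    split_ifs <;> ring
  -- entrywise formula for the A-terms
  have hT : ∀ (x : Fin n → ℝ) (p q a b : Fin n),
      (eMat p * (A x)ᵀ * e1Mat n * Jmat n * A x * Jmat n * eMat q) a b
        = (if a = p then 1 else 0) * (if b = q then 1 else 0)
          * (-(A x ⟨0, hn⟩ a * A x ⟨0, hn⟩ b) * eps b) := by
    intro x p q a b
    simp only [eMat, Jmat, e1Mat, Matrix.mul_diagonal, Pi.single_apply]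
    rw [Matrix.mul_apply]
    rw [Finset.sum_eq_single (⟨0, hn⟩ : Fin n)]
    · simp only [Matrix.mul_diagonal, Matrix.diagonal_mul, Matrix.transpose_apply,
        Pi.single_apply]
      simp [eps]
      split_ifs <;> ring
    · intro c _ hc
      have hc0 : (c : ℕ) ≠ 0 := fun h => hc (Fin.ext h)
      simp [Matrix.mul_diagonal, Matrix.diagonal_mul, hc0]
    · simp
  constructor
  · -- Part 1
    intro x hx k i j hij
    have h := congrFun (congrFun (hdA x hx j) k) i
    have hL : mpd j A x k i = pd j (fun y => A y k i) x := rfl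
    rw [hL] at h
    rw [h, Matrix.mul_apply, Finset.sum_eq_single j]
    · simp only [Matrix.sub_apply, eMat, Jmat, Matrix.diagonal_mul, Matrix.mul_diagonal,
        Matrix.transpose_apply, Pi.single_apply]
      simp [hij, Ne.symm hij]
    · intro m _ hm
      simp only [Matrix.sub_apply, eMat, Jmat, Matrix.diagonal_mul, Matrix.mul_diagonal,
        Matrix.transpose_apply, Pi.single_apply]
      simp [hm, hij, Ne.symm hij]
    · simp
  constructor
  · -- Part 2
    intro x hx i j hij
    have h := congrFun (congrFun (hcurv x hx j i) i) j
    simp only [Matrix.add_apply, Matrix.sub_apply, Matrix.zero_apply] at h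
    rw [hmpdω j i x hx i j, hmpdω i j x hx i j, hT, hT] at h
    have hprod1 : (ω j x * ω i x) i j = 0 := by
      rw [Matrix.mul_apply]
      apply Finset.sum_eq_zero
      intro c _
      rw [hωe, hωe]
      by_cases hc : c = i <;> by_cases hc2 : c = j <;>
        simp [hc, hc2, hij, Ne.symm hij] <;> ring
    have hprod2 : (ω i x * ω j x) i j
        = -(eps j * ∑ c : Fin n, eps c * F x i c * F x j c) := by
      rw [Matrix.mul_apply]
      have he : ∀ c : Fin n, ω i x i c * ω j x c j
          = -(eps j * (eps c * F x i c * F x j c)) := by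
        intro c
        rw [hωe, hωe]
        by_cases hc : c = i <;> by_cases hc2 : c = j <;>
          simp [hc, hc2, hij, Ne.symm hij, hFdiag x hx] <;> ring
      rw [Finset.sum_congr rfl (fun c _ => he c)]
      rw [Finset.sum_neg_distrib, ← Finset.mul_sum]
    rw [hprod1, hprod2] at h
    have hsum : (∑ k ∈ Finset.univ.filter (fun k : Fin n => k ≠ i ∧ k ≠ j),
        eps k * F x i k * F x j k) = ∑ c : Fin n, eps c * F x i c * F x j c := by
      symm
      apply (Finset.sum_subset (Finset.filter_subset _ _) _).symm
      intro c _ hc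
      simp only [Finset.mem_filter, Finset.mem_univ, true_and, not_and_or, not_not] at hc
      rcases hc with hc | hc <;> subst hc <;> simp [hFdiag x hx]
    rw [hsum]
    simp [hij, Ne.symm hij] at h
    have hj2 : eps j = -1 ∨ eps j = 1 := by unfold eps; split_ifs <;> simp
    rcases hj2 with hj | hj <;> rw [hj] at h ⊢ <;> nlinarith [h]
  · -- Part 3
    intro x hx i j k hij hjk hik
    have h := congrFun (congrFun (hcurv x hx k i) i) j
    simp only [Matrix.add_apply, Matrix.sub_apply, Matrix.zero_apply] at h
    rw [hmpdω k i x hx i j, hmpdω i k x hx i j, hT, hT] at h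
    have hprod1 : (ω k x * ω i x) i j = 0 := by
      rw [Matrix.mul_apply]
      apply Finset.sum_eq_zero
      intro c _
      rw [hωe, hωe]
      by_cases hc : c = i <;> by_cases hc2 : c = k <;>
        simp [hc, hc2, hij, Ne.symm hij, hik, Ne.symm hik, hjk, Ne.symm hjk] <;> ring
    have hprod2 : (ω i x * ω k x) i j = F x i k * F x k j := by
      rw [Matrix.mul_apply]
      rw [Finset.sum_eq_single k]
      · rw [hωe, hωe]
        simp [hij, Ne.symm hij, hik, Ne.symm hik, hjk, Ne.symm hjk, hFdiag x hx]
      · intro c _ hc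
        rw [hωe, hωe]
        by_cases hc2 : c = i <;> simp [hc, hc2, hij, Ne.symm hij, hik, Ne.symm hik, hjk, Ne.symm hjk]
      · simp
    rw [hprod1, hprod2] at h
    simp [hij, hik, hjk, Ne.symm hij, Ne.symm hik, Ne.symm hjk] at h
    linarith [h]


end
end
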